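/- arXiv:2103.15574 — 4 statements merged into one kernel-verified Lean document; each statement's English description precedes it below -/
import Mathlib

section
/- Let G be a finite 2-Frobenius group with respect to normal subgroups K ≤ L, and let H be a Frobenius complement of K in L. Then H is normal in its normalizer N_G(H), and there exists a subgroup C of N_G(H) such that N_G(H) is a Frobenius group with kernel H and complement C. -/
/-- The cyclic graph `Δ(G)`: vertices are the nonidentity elements of `G`,
with distinct `x` and `y` adjacent iff `⟨x, y⟩` is cyclic. -/
def cyclicGraph (G : Type*) [Group G] : SimpleGraph {x : G // x ≠ 1} where
  Adj x y := x ≠ y ∧ IsCyclic ↥(Subgroup.closure ({(x : G), (y : G)} : Set G))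
  symm := ⟨by
    rintro x y ⟨hne, hcyc⟩
    refine ⟨hne.symm, ?_⟩
    rwa [Set.pair_comm]⟩
  loopless := ⟨fun x h => h.1 rfl⟩

/-- `H` is a Frobenius complement of `K` in `L` (all subgroups of an ambient group `G`):
`H ≤ L`, `H` is nontrivial, `L = KH`, `K ⊓ H = 1`, and `C_K(h) = 1` for all `1 ≠ h ∈ H`. -/
def IsFrobeniusComplementIn {G : Type*} [Group G] (K L H : Subgroup G) : Prop :=
  H ≤ L ∧ H ≠ ⊥ ∧ (∀ x ∈ L, ∃ k ∈ K, ∃ h ∈ H, x = k * h) ∧ K ⊓ H = ⊥ ∧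
    ∀ h ∈ H, h ≠ 1 → ∀ k ∈ K, Commute h k → k = 1

/-- `G` is a Frobenius group with kernel `K` and complement `H`. -/
def IsFrobenius (G : Type*) [Group G] (K H : Subgroup G) : Prop :=
  K.Normal ∧ K ≠ ⊥ ∧ IsFrobeniusComplementIn K ⊤ H

/-- `G` is a 2-Frobenius group with respect to the normal subgroups `K ≤ L`:
`L` is a Frobenius group with kernel `K` (and some complement), and `G/K` is a
Frobenius group with kernel `L/K` (and some complement). -/
def Is2Frobenius (G : Type*) [Group G] (K L : Subgroup G) [K.Normal] [L.Normal] : Prop :=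
  K ≠ ⊥ ∧ K < L ∧
    (∃ H : Subgroup G, IsFrobeniusComplementIn K L H) ∧
    (∃ C : Subgroup (G ⧸ K),
      IsFrobeniusComplementIn (L.map (QuotientGroup.mk' K)) ⊤ C)

section FrobAux

variable {Γ : Type*} [Group Γ]

lemma conj_eq_one {g x : Γ} (h : g * x * g⁻¹ = 1) : x = 1 := by
  have := congrArg (fun z => g⁻¹ * z * g) h
  simp only [mul_one] at this
  calc x = g⁻¹ * (g * x * g⁻¹) * g := by group
    _ = g⁻¹ * 1 * g := by rw [h]
    _ = 1 := by group

lemma conj_eq_one' {g x : Γ} (h : g⁻¹ * x * g = 1) : x = 1 := by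
  refine conj_eq_one (g := g⁻¹) ?_
  simpa using h


/-- Conjugate subgroup `g J g⁻¹`. -/
def conjSub (g : Γ) (J : Subgroup Γ) : Subgroup Γ := J.map (MulAut.conj g).toMonoidHom

lemma mem_conjSub_iff {g x : Γ} {J : Subgroup Γ} : x ∈ conjSub g J ↔ g⁻¹ * x * g ∈ J := by
  constructor
  · rintro ⟨j, hj, rfl⟩
    simpa [MulAut.conj_apply, mul_assoc] using hj
  · intro h
    exact ⟨g⁻¹ * x * g, h, by simp [MulAut.conj_apply, mul_assoc]⟩

lemma mem_conjSub_of_mem {g j : Γ} {J : Subgroup Γ} (hj : j ∈ J) : g * j * g⁻¹ ∈ conjSub g J := by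
  rw [mem_conjSub_iff]; simpa [mul_assoc]

lemma conjSub_conjSub (a b : Γ) (J : Subgroup Γ) :
    conjSub a (conjSub b J) = conjSub (a * b) J := by
  ext x; simp only [mem_conjSub_iff, mul_inv_rev, mul_assoc]

lemma conjSub_one (J : Subgroup Γ) : conjSub 1 J = J := by
  ext x; simp [mem_conjSub_iff]

lemma conjSub_self_of_mem {y : Γ} {J : Subgroup Γ} (hy : y ∈ J) : conjSub y J = J := by
  ext x
  rw [mem_conjSub_iff]
  constructor
  · intro h
    have := J.mul_mem (J.mul_mem hy h) (J.inv_mem hy)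
    simpa [mul_assoc] using this
  · intro h
    exact J.mul_mem (J.mul_mem (J.inv_mem hy) h) hy

lemma conjSub_inf (g : Γ) (A B : Subgroup Γ) :
    conjSub g (A ⊓ B) = conjSub g A ⊓ conjSub g B := by
  ext x; simp [mem_conjSub_iff]

lemma conjSub_ne_bot {g : Γ} {J : Subgroup Γ} (h : J ≠ ⊥) : conjSub g J ≠ ⊥ := by
  obtain ⟨⟨j, hjJ⟩, hj1⟩ := (Subgroup.ne_bot_iff_exists_ne_one.mp h)
  refine Subgroup.ne_bot_iff_exists_ne_one.mpr ⟨⟨g * j * g⁻¹, mem_conjSub_of_mem hjJ⟩, ?_⟩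
  simp only [ne_eq, Subgroup.mk_eq_one]
  intro hc
  apply hj1
  have hj1' : j = 1 := by
    have := congrArg (fun z => g⁻¹ * z * g) hc
    simpa [mul_assoc] using this
  exact Subtype.ext hj1'

lemma conjSub_mono {g : Γ} {A B : Subgroup Γ} (h : A ≤ B) : conjSub g A ≤ conjSub g B := by
  intro x hx
  rw [mem_conjSub_iff] at hx ⊢
  exact h hx

lemma card_conjSub (g : Γ) (J : Subgroup Γ) : Nat.card (conjSub g J) = Nat.card J :=
  (Nat.card_congr (J.equivMapOfInjective _ (MulAut.conj g).injective).toEquiv).symm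

lemma mem_normalizer_of_conjSub_eq {g : Γ} {J : Subgroup Γ} (h : conjSub g J = J) :
    g ∈ Subgroup.normalizer (J : Set Γ) := by
  rw [Subgroup.mem_normalizer_iff]
  intro x
  constructor
  · intro hx; rw [← h]; exact mem_conjSub_of_mem hx
  · intro hx
    rw [← h] at hx
    simpa [mul_assoc] using mem_conjSub_iff.mp hx


section Frob

variable {K L H : Subgroup Γ} [hKN : K.Normal]

/-- Uniqueness of the factorization `x = u h u⁻¹`. -/
lemma frob_uniq (hdisj : K ⊓ H = ⊥)
    (hfrob : ∀ h ∈ H, h ≠ 1 → ∀ k ∈ K, Commute h k → k = 1)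
    {u v h h' : Γ} (hu : u ∈ K) (hv : v ∈ K) (hh : h ∈ H) (hh' : h' ∈ H) (hne : h ≠ 1)
    (heq : u * h * u⁻¹ = v * h' * v⁻¹) : u = v ∧ h = h' := by
  set c := v⁻¹ * u with hc
  have hcK : c ∈ K := K.mul_mem (K.inv_mem hv) hu
  have h1 : c * h * c⁻¹ = h' := by
    have e1 : v⁻¹ * (u * h * u⁻¹) * v = h' := by rw [heq]; group
    calc c * h * c⁻¹ = v⁻¹ * (u * h * u⁻¹) * v := by rw [hc]; group
      _ = h' := e1
  have h2 : h' * h⁻¹ ∈ K := by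
    have e2 : h' * h⁻¹ = c * (h * c⁻¹ * h⁻¹) := by rw [← h1]; group
    rw [e2]
    exact K.mul_mem hcK (hKN.conj_mem _ (K.inv_mem hcK) h)
  have h3 : h' * h⁻¹ ∈ H := H.mul_mem hh' (H.inv_mem hh)
  have h4 : h' * h⁻¹ = 1 := by
    have : h' * h⁻¹ ∈ K ⊓ H := ⟨h2, h3⟩
    rwa [hdisj, Subgroup.mem_bot] at this
  have h5 : h' = h := by
    have := congrArg (· * h) h4
    simpa using this
  subst h5
  have h6 : Commute h' c := by
    have e3 : c * h' = h' * c := by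
      have := congrArg (· * c) h1
      simpa [mul_assoc] using this
    exact e3.symm
  have h7 : c = 1 := hfrob h' hh hne c hcK h6
  refine ⟨?_, rfl⟩
  have := congrArg (v * ·) (hc ▸ h7 : v⁻¹ * u = 1)
  simpa [mul_assoc] using this

/-- Covering: every element of `L \\ K` is conjugate by an element of `K`
to an element of `H`. -/
lemma frob_exists [Finite Γ] (hH : IsFrobeniusComplementIn K L H) {x : Γ}
    (hx : x ∈ L) (hxK : x ∉ K) :
    ∃ w ∈ K, ∃ h ∈ H, h ≠ 1 ∧ x = w * h * w⁻¹ := by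
  obtain ⟨hHL, hHb, hfact, hdisj, hfrob⟩ := hH
  obtain ⟨k, hk, h, hh, hxkh⟩ := hfact x hx
  have hhne : h ≠ 1 := by
    rintro rfl
    rw [mul_one] at hxkh
    exact hxK (hxkh ▸ hk)
  let ψ : K → K := fun u => ⟨(u : Γ)⁻¹ * (h * u * h⁻¹),
    K.mul_mem (K.inv_mem u.2) (hKN.conj_mem _ u.2 h)⟩
  have hinj : Function.Injective ψ := by
    rintro ⟨uu, huu⟩ ⟨vv, hvv⟩ huv
    have e : uu⁻¹ * (h * uu * h⁻¹) = vv⁻¹ * (h * vv * h⁻¹) := congrArg Subtype.val huv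
    have e2 : h * (vv * uu⁻¹) = (vv * uu⁻¹) * h := by
      calc h * (vv * uu⁻¹)
          = (vv * (vv⁻¹ * (h * vv * h⁻¹)) * (h * uu⁻¹ * h⁻¹)) * h := by group
        _ = (vv * (uu⁻¹ * (h * uu * h⁻¹)) * (h * uu⁻¹ * h⁻¹)) * h := by rw [← e]
        _ = (vv * uu⁻¹) * h := by group
    have hvu : vv * uu⁻¹ ∈ K := K.mul_mem hvv (K.inv_mem huu)
    have h1 : vv * uu⁻¹ = 1 := hfrob h hh hhne _ hvu e2
    have h2 : uu = vv := by
      have := congrArg (· * uu) h1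
      simpa using this.symm
    exact Subtype.ext h2
  have hsurj : Function.Surjective ψ := Finite.injective_iff_surjective.mp hinj
  obtain ⟨u, hu⟩ := hsurj ⟨k, hk⟩
  have hu' : (u : Γ)⁻¹ * (h * u * h⁻¹) = k := congrArg Subtype.val hu
  refine ⟨(u : Γ)⁻¹, K.inv_mem u.2, h, hh, hhne, ?_⟩
  rw [hxkh, ← hu']
  group

end Frob

/-- In a Frobenius group, elements outside the kernel have trivial centralizer in the kernel. -/
lemma frob_centralizer [Finite Γ] {K H : Subgroup Γ} [hKN : K.Normal]
    (hH : IsFrobeniusComplementIn K ⊤ H) {y x : Γ} (hy : y ∉ K) (hx : x ∈ K)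
    (hcomm : Commute y x) : x = 1 := by
  obtain ⟨w, hw, c, hc, hcne, hy'⟩ := frob_exists hH (Subgroup.mem_top y) hy
  have hz : w⁻¹ * x * w ∈ K := by
    have := hKN.conj_mem x hx w⁻¹
    simpa using this
  have e : c * (w⁻¹ * x * w) = (w⁻¹ * x * w) * c := by
    have e0 : (w * c * w⁻¹) * x = x * (w * c * w⁻¹) := by rw [← hy']; exact hcomm
    calc c * (w⁻¹ * x * w) = w⁻¹ * ((w * c * w⁻¹) * x) * w := by group
      _ = w⁻¹ * (x * (w * c * w⁻¹)) * w := by rw [e0]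
      _ = (w⁻¹ * x * w) * c := by group
  have h1 := hH.2.2.2.2 c hc hcne _ hz e
  exact conj_eq_one' h1

/-- A conjugate of a Frobenius complement is a Frobenius complement. -/
lemma frob_conjSub {K L H : Subgroup Γ} [hKN : K.Normal] [hLN : L.Normal]
    (hH : IsFrobeniusComplementIn K L H) (g : Γ) :
    IsFrobeniusComplementIn K L (conjSub g H) := by
  obtain ⟨hHL, hHb, hfact, hdisj, hfrob⟩ := hH
  refine ⟨?_, conjSub_ne_bot hHb, ?_, ?_, ?_⟩
  · intro x hx
    have h1 := hHL (mem_conjSub_iff.mp hx)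
    have h2 := hLN.conj_mem _ h1 g
    have e : g * (g⁻¹ * x * g) * g⁻¹ = x := by group
    rwa [e] at h2
  · intro x hx
    have hx' : g⁻¹ * x * g ∈ L := by
      have := hLN.conj_mem _ hx g⁻¹
      simpa using this
    obtain ⟨k, hk, h, hh, hkh⟩ := hfact _ hx'
    refine ⟨g * k * g⁻¹, hKN.conj_mem _ hk g, g * h * g⁻¹, mem_conjSub_of_mem hh, ?_⟩
    calc x = g * (g⁻¹ * x * g) * g⁻¹ := by group
      _ = g * (k * h) * g⁻¹ := by rw [hkh]
      _ = g * k * g⁻¹ * (g * h * g⁻¹) := by group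
  · rw [Subgroup.eq_bot_iff_forall]
    rintro x ⟨hx1, hx2⟩
    have h1 : g⁻¹ * x * g ∈ K := by
      have := hKN.conj_mem _ hx1 g⁻¹
      simpa using this
    have h2 : g⁻¹ * x * g ∈ H := mem_conjSub_iff.mp hx2
    have h3 : g⁻¹ * x * g = 1 := by
      have : g⁻¹ * x * g ∈ K ⊓ H := ⟨h1, h2⟩
      rwa [hdisj, Subgroup.mem_bot] at this
    exact conj_eq_one' h3
  · intro h hh hhne k hk hcomm
    have h0 : g⁻¹ * h * g ∈ H := mem_conjSub_iff.mp hh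
    have h0ne : g⁻¹ * h * g ≠ 1 := fun hc => hhne (conj_eq_one' hc)
    have hk' : g⁻¹ * k * g ∈ K := by
      have := hKN.conj_mem _ hk g⁻¹
      simpa using this
    have e : (g⁻¹ * h * g) * (g⁻¹ * k * g) = (g⁻¹ * k * g) * (g⁻¹ * h * g) := by
      calc (g⁻¹ * h * g) * (g⁻¹ * k * g) = g⁻¹ * (h * k) * g := by group
        _ = g⁻¹ * (k * h) * g := by rw [hcomm.eq]
        _ = (g⁻¹ * k * g) * (g⁻¹ * h * g) := by group
    exact conj_eq_one' (hfrob _ h0 h0ne _ hk' e)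

/-- **Conjugacy of Frobenius complements** (up to an element of the kernel). -/
lemma frob_conj [Fintype Γ] {K L H H2 : Subgroup Γ} [hKN : K.Normal]
    (hKL : K ≤ L) (hH : IsFrobeniusComplementIn K L H)
    (hH2 : IsFrobeniusComplementIn K L H2) :
    ∃ w ∈ K, H2 ≤ conjSub w H := by
  classical
  have hHfull := hH
  obtain ⟨hHL, hHb, hfact, hdisj, hfrob⟩ := hH
  obtain ⟨hH2L, hH2b, hfact2, hdisj2, hfrob2⟩ := hH2
  have hynK : ∀ y ∈ H2, y ≠ 1 → y ∉ K := by
    intro y hy hy1 hyK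
    have : y ∈ K ⊓ H2 := ⟨hyK, hy⟩
    rw [hdisj2, Subgroup.mem_bot] at this
    exact hy1 this
  have uniqW : ∀ w ∈ K, ∀ v ∈ K, ∀ y : Γ, y ≠ 1 →
      y ∈ conjSub w H → y ∈ conjSub v H → w = v := by
    intro w hw v hv y hy1 hyw hyv
    have h1 : w⁻¹ * y * w ∈ H := mem_conjSub_iff.mp hyw
    have h2 : v⁻¹ * y * v ∈ H := mem_conjSub_iff.mp hyv
    have h1ne : w⁻¹ * y * w ≠ 1 := fun hc => hy1 (conj_eq_one' hc)
    have e : w * (w⁻¹ * y * w) * w⁻¹ = v * (v⁻¹ * y * v) * v⁻¹ := by group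
    exact (frob_uniq hdisj hfrob hw hv h1 h2 h1ne e).1
  set S : Set (Subgroup Γ) := {M | M ≠ ⊥ ∧ ∃ w ∈ K, M = H2 ⊓ conjSub w H} with hSdef
  have memS_unique : ∀ M ∈ S, ∀ M' ∈ S, ∀ y : Γ, y ≠ 1 → y ∈ M → y ∈ M' → M = M' := by
    rintro M ⟨hMb, w, hw, rfl⟩ M' ⟨hM'b, v, hv, rfl⟩ y hy1 hyM hyM'
    rw [uniqW w hw v hv y hy1 hyM.2 hyM'.2]
  have memS_exists : ∀ y ∈ H2, y ≠ 1 → ∃ M ∈ S, y ∈ M := by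
    intro y hy hy1
    obtain ⟨w, hw, h, hh, hhne, hy'⟩ := frob_exists hHfull (hH2L hy) (hynK y hy hy1)
    have hyc : y ∈ conjSub w H := by
      rw [mem_conjSub_iff]
      have e : w⁻¹ * y * w = h := by rw [hy']; group
      rw [e]; exact hh
    refine ⟨H2 ⊓ conjSub w H, ⟨?_, w, hw, rfl⟩, hy, hyc⟩
    refine Subgroup.ne_bot_iff_exists_ne_one.mpr ⟨⟨y, hy, hyc⟩, fun hc => hy1 ?_⟩
    exact congrArg Subtype.val hc
  have Sconj : ∀ y ∈ H2, ∀ M ∈ S, conjSub y M ∈ S := by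
    rintro y hy M ⟨hMb, w, hw, rfl⟩
    obtain ⟨k₀, hk₀, h₀, hh₀, hyw⟩ := hfact (y * w) (L.mul_mem (hH2L hy) (hKL hw))
    refine ⟨conjSub_ne_bot hMb, k₀, hk₀, ?_⟩
    rw [conjSub_inf, conjSub_self_of_mem hy, conjSub_conjSub, hyw, ← conjSub_conjSub,
      conjSub_self_of_mem hh₀]
  have fix_mem : ∀ y ∈ H2, y ≠ 1 → ∀ M ∈ S, conjSub y M = M → y ∈ M := by
    rintro y hy hy1 M ⟨hMb, w, hw, rfl⟩ hfix
    obtain ⟨w₀, hw₀, h', hh', hh'ne, hy'⟩ := frob_exists hHfull (hH2L hy) (hynK y hy hy1)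
    obtain ⟨⟨x₀, hx₀M⟩, hx₀ne⟩ := Subgroup.ne_bot_iff_exists_ne_one.mp hMb
    have hx₀1 : x₀ ≠ 1 := fun hc => hx₀ne (Subtype.ext hc)
    set c := w₀⁻¹ * w with hc
    have hcK : c ∈ K := K.mul_mem (K.inv_mem hw₀) hw
    set v := w₀ * (h' * c * h'⁻¹) with hv
    have hvK : v ∈ K := K.mul_mem hw₀ (hKN.conj_mem _ hcK h')
    have hyweq : y * w = v * h' := by rw [hy', hv, hc]; group
    have hx₀yM : x₀ ∈ conjSub y (H2 ⊓ conjSub w H) := hfix.symm ▸ hx₀M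
    have hx₀v : x₀ ∈ conjSub v H := by
      have h1 : x₀ ∈ conjSub (y * w) H := by
        rw [← conjSub_conjSub]
        exact conjSub_mono (le_trans inf_le_right le_rfl) hx₀yM
      rw [hyweq, ← conjSub_conjSub, conjSub_self_of_mem hh'] at h1
      exact h1
    have hx₀w : x₀ ∈ conjSub w H := hx₀M.2
    have hwv : w = v := uniqW w hw v hvK x₀ hx₀1 hx₀w hx₀v
    have e0 : w = w₀ * c := by rw [hc]; group
    have e1 : c = h' * c * h'⁻¹ := by
      have := hwv
      rw [hv] at this
      rw [e0] at this
      exact mul_left_cancel this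
    have e2 : Commute h' c := by
      have := congrArg (· * h') e1.symm
      have e : h' * c = c * h' := by simpa [mul_assoc] using this
      exact e
    have hc1 : c = 1 := hfrob h' hh' hh'ne c hcK e2
    have hww₀ : w = w₀ := by rw [e0, hc1, mul_one]
    have hyc : y ∈ conjSub w H := by
      rw [mem_conjSub_iff, hww₀, hy']
      have e3 : w₀⁻¹ * (w₀ * h' * w₀⁻¹) * w₀ = h' := by group
      rw [e3]; exact hh'
    exact Subgroup.mem_inf.mpr ⟨hy, hyc⟩
  -- choice of a nonidentity element in each member of `S`
  choose elt helt using fun (M : {M' : Subgroup Γ // M' ∈ S}) =>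
    Subgroup.ne_bot_iff_exists_ne_one.mp M.2.1
  have heltne : ∀ M : {M' : Subgroup Γ // M' ∈ S}, (↑(elt M) : Γ) ≠ 1 :=
    fun M hc => helt M (Subtype.ext hc)
  have heltH2 : ∀ M : {M' : Subgroup Γ // M' ∈ S}, (↑(elt M) : Γ) ∈ H2 := by
    intro M
    obtain ⟨hMb, w, hw, hMeq⟩ := M.2
    have h0 : (↑(elt M) : Γ) ∈ (M : Subgroup Γ) := (elt M).2
    have hle : (M : Subgroup Γ) ≤ H2 := by rw [hMeq]; exact inf_le_left
    exact hle h0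
  have heltinj : Function.Injective (fun M : {M' : Subgroup Γ // M' ∈ S} => (↑(elt M) : Γ)) := by
    intro M M' he
    apply Subtype.ext
    refine memS_unique _ M.2 _ M'.2 _ (heltne M) (elt M).2 ?_
    simp only at he
    rw [he]
    exact (elt M').2
  have hfin : Finite {M' : Subgroup Γ // M' ∈ S} := Finite.of_injective _ heltinj
  letI : Fintype {M' : Subgroup Γ // M' ∈ S} := Fintype.ofFinite _
  letI : Fintype ↥H2 := Fintype.ofFinite _
  letI : MulAction ↥H2 {M' : Subgroup Γ // M' ∈ S} :=
    { smul := fun y M => ⟨conjSub (y : Γ) M.1, Sconj (y : Γ) y.2 M.1 M.2⟩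
      one_smul := fun M => Subtype.ext (by
        show conjSub ((1 : ↥H2) : Γ) M.1 = M.1
        rw [Subgroup.coe_one, conjSub_one])
      mul_smul := fun y z M => Subtype.ext (by
        show conjSub ((y * z : ↥H2) : Γ) M.1 = conjSub (y : Γ) (conjSub (z : Γ) M.1)
        rw [Subgroup.coe_mul, conjSub_conjSub]) }
  have smul_def : ∀ (y : ↥H2) (M : {M' : Subgroup Γ // M' ∈ S}),
      ((y • M : {M' : Subgroup Γ // M' ∈ S}) : Subgroup Γ) = conjSub (y : Γ) M.1 :=
    fun y M => rfl
  letI : ∀ y : ↥H2, Fintype (MulAction.fixedBy {M' : Subgroup Γ // M' ∈ S} y) :=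
    fun y => Fintype.ofFinite _
  letI : Fintype (Quotient (MulAction.orbitRel ↥H2 {M' : Subgroup Γ // M' ∈ S})) :=
    Fintype.ofFinite _
  -- nonidentity element of H2
  obtain ⟨⟨y₀, hy₀H2⟩, hy₀ne⟩ := Subgroup.ne_bot_iff_exists_ne_one.mp hH2b
  have hy₀1 : y₀ ≠ 1 := fun hc => hy₀ne (Subtype.ext hc)
  obtain ⟨M₀, hM₀S, hy₀M₀⟩ := memS_exists y₀ hy₀H2 hy₀1
  set n := Fintype.card ↥H2 with hn
  set a := Fintype.card {M' : Subgroup Γ // M' ∈ S} with ha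
  set t := Fintype.card (Quotient (MulAction.orbitRel ↥H2 {M' : Subgroup Γ // M' ∈ S})) with htdef
  have hn2 : 2 ≤ n := by
    rw [hn]
    refine Fintype.one_lt_card_iff_nontrivial.mpr ?_
    exact (Subgroup.nontrivial_iff_ne_bot H2).mpr hH2b
  have hfix1 : ∀ y : ↥H2, y ≠ 1 →
      Fintype.card (MulAction.fixedBy {M' : Subgroup Γ // M' ∈ S} y) = 1 := by
    intro y hy1
    have hy1' : (y : Γ) ≠ 1 := fun hc => hy1 (Subtype.ext hc)
    obtain ⟨My, hMyS, hyMy⟩ := memS_exists (y : Γ) y.2 hy1'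
    rw [Fintype.card_eq_one_iff]
    refine ⟨⟨⟨My, hMyS⟩, ?_⟩, ?_⟩
    · rw [MulAction.mem_fixedBy]
      exact Subtype.ext (conjSub_self_of_mem hyMy)
    · rintro ⟨⟨M, hMS⟩, hMfix⟩
      apply Subtype.ext
      apply Subtype.ext
      rw [MulAction.mem_fixedBy] at hMfix
      have hMeq : conjSub (y : Γ) M = M := congrArg Subtype.val hMfix
      have hyM : (y : Γ) ∈ M := fix_mem (y : Γ) y.2 hy1' M hMS hMeq
      exact memS_unique M hMS My hMyS (y : Γ) hy1' hyM hyMy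
  have hfixtop : Fintype.card
      (MulAction.fixedBy {M' : Subgroup Γ // M' ∈ S} (1 : ↥H2)) = a := by
    rw [ha]
    apply Fintype.card_congr
    apply Equiv.subtypeUnivEquiv
    intro M
    rw [MulAction.mem_fixedBy]
    exact one_smul _ _
  have hburn := MulAction.sum_card_fixedBy_eq_card_orbits_mul_card_group
    ↥H2 {M' : Subgroup Γ // M' ∈ S}
  have hsum : ∑ y : ↥H2,
      Fintype.card (MulAction.fixedBy {M' : Subgroup Γ // M' ∈ S} y) = a + (n - 1) := by
    rw [← Finset.add_sum_erase Finset.univ _ (Finset.mem_univ (1 : ↥H2)), hfixtop]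
    congr 1
    rw [Finset.sum_congr rfl (fun y hy => hfix1 y (Finset.ne_of_mem_erase hy)),
      Finset.sum_const, smul_eq_mul, mul_one,
      Finset.card_erase_of_mem (Finset.mem_univ _), Finset.card_univ]
  have key : a + (n - 1) = t * n := by rw [← hsum, hburn]
  have ht1 : 1 ≤ t := by
    rw [htdef]
    refine Fintype.card_pos_iff.mpr ?_
    exact ⟨Quotient.mk _ ⟨M₀, hM₀S⟩⟩
  have ha1 : 1 ≤ a := by
    rw [ha]
    exact Fintype.card_pos_iff.mpr ⟨⟨M₀, hM₀S⟩⟩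
  have haN : a < n := by
    rw [ha, hn]
    refine Fintype.card_lt_of_injective_of_notMem
      (fun M => (⟨_, heltH2 M⟩ : ↥H2)) ?_ (b := 1) ?_
    · intro M M' he
      apply heltinj
      simpa using congrArg Subtype.val he
    · rintro ⟨M, hM⟩
      exact heltne M (by simpa using congrArg Subtype.val hM)
  have ht : t = 1 := by
    rcases Nat.lt_or_ge t 2 with h | h
    · omega
    · exfalso
      have h2n : 2 * n ≤ t * n := Nat.mul_le_mul_right n h
      omega
  have haa : a = 1 := by
    rw [ht, one_mul] at key
    omega
  obtain ⟨hM₀b, w₀, hw₀, hM₀eq⟩ := hM₀S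
  refine ⟨w₀, hw₀, ?_⟩
  intro y hy
  by_cases hy1 : y = 1
  · rw [hy1]; exact (conjSub w₀ H).one_mem
  · obtain ⟨M, hMS, hyM⟩ := memS_exists y hy hy1
    have hMM₀ : M = M₀ := by
      obtain ⟨x, hx⟩ := Fintype.card_eq_one_iff.mp haa
      have e1 := hx ⟨M, hMS⟩
      have e2 := hx ⟨M₀, ⟨hM₀b, w₀, hw₀, hM₀eq⟩⟩
      exact congrArg Subtype.val (e1.trans e2.symm)
    rw [hMM₀, hM₀eq] at hyM
    exact hyM.2


end FrobAux

theorem normalizer_of_complement_is_frobenius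
    {G : Type*} [Group G] [Fintype G] (K L : Subgroup G) [K.Normal] [L.Normal]
    (h2 : Is2Frobenius G K L) (H : Subgroup G) (hH : IsFrobeniusComplementIn K L H) :
    (H.subgroupOf (Subgroup.normalizer (H : Set G))).Normal ∧
      ∃ C : Subgroup ↥(Subgroup.normalizer (H : Set G)),
        IsFrobenius ↥(Subgroup.normalizer (H : Set G)) (H.subgroupOf (Subgroup.normalizer (H : Set G))) C := by
  classical
  obtain ⟨hKbot, hKL', hcmpl, Cb, hC⟩ := h2
  have hKL : K ≤ L := hKL'.le
  have hHfull := hH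
  obtain ⟨hHL, hHb, hfact, hdisj, hfrob⟩ := hH
  set N := Subgroup.normalizer (H : Set G) with hNdef
  have hHN : H ≤ N := Subgroup.le_normalizer
  refine ⟨Subgroup.normal_in_normalizer, ?_⟩
  -- quotient setup
  haveI hLbarN : (L.map (QuotientGroup.mk' K)).Normal :=
    (inferInstance : L.Normal).map _ (QuotientGroup.mk'_surjective K)
  -- N ∩ K is trivial
  obtain ⟨⟨h₁, hh₁H⟩, hh₁ne'⟩ := Subgroup.ne_bot_iff_exists_ne_one.mp hHb
  have hh₁ne : h₁ ≠ 1 := fun hc => hh₁ne' (Subtype.ext hc)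
  have hNK : ∀ k ∈ K, k ∈ N → k = 1 := by
    intro k hkK hkN
    have hconj : k * h₁ * k⁻¹ ∈ H := (Subgroup.mem_normalizer_iff.mp hkN h₁).mp hh₁H
    have hcH : (k * h₁ * k⁻¹) * h₁⁻¹ ∈ H := H.mul_mem hconj (H.inv_mem hh₁H)
    have hcK : (k * h₁ * k⁻¹) * h₁⁻¹ ∈ K := by
      have e : (k * h₁ * k⁻¹) * h₁⁻¹ = k * (h₁ * k⁻¹ * h₁⁻¹) := by group
      rw [e]
      exact K.mul_mem hkK ((inferInstance : K.Normal).conj_mem _ (K.inv_mem hkK) h₁)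
    have hc1 : (k * h₁ * k⁻¹) * h₁⁻¹ = 1 := by
      have : (k * h₁ * k⁻¹) * h₁⁻¹ ∈ K ⊓ H := ⟨hcK, hcH⟩
      rwa [hdisj, Subgroup.mem_bot] at this
    have hcomm : Commute h₁ k := by
      have e1 : k * h₁ * k⁻¹ = h₁ := by
        have := congrArg (· * h₁) hc1
        simpa [mul_assoc] using this
      have e2 : k * h₁ = h₁ * k := by
        have := congrArg (· * k) e1
        simpa [mul_assoc] using this
      exact e2.symm
    exact hfrob h₁ hh₁H hh₁ne k hkK hcomm
  -- N ∩ L = H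
  have hNL : ∀ x ∈ N, x ∈ L → x ∈ H := by
    intro x hxN hxL
    obtain ⟨k, hk, h, hh, hxkh⟩ := hfact x hxL
    have hkN : k ∈ N := by
      have : k = x * h⁻¹ := by rw [hxkh]; group
      rw [this]
      exact N.mul_mem hxN (N.inv_mem (hHN hh))
    have hk1 : k = 1 := hNK k hk hkN
    rw [hxkh, hk1, one_mul]
    exact hh
  -- membership in L is detected in the quotient
  have hmemL : ∀ y : G, (QuotientGroup.mk' K y) ∈ L.map (QuotientGroup.mk' K) → y ∈ L := by
    intro y hy
    obtain ⟨l, hlL, hml⟩ := hy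
    obtain ⟨z, hzK, hlz⟩ := (QuotientGroup.mk'_eq_mk' K).mp hml
    rw [← hlz]
    exact L.mul_mem hlL (hKL hzK)
  -- centralizer property from the quotient Frobenius structure
  have hcent : ∀ y : G, y ∉ L → ∀ x ∈ H, Commute y x → x = 1 := by
    intro y hyL x hxH hcomm
    have hyq : (QuotientGroup.mk' K y) ∉ L.map (QuotientGroup.mk' K) :=
      fun hc => hyL (hmemL y hc)
    have hxq : (QuotientGroup.mk' K x) ∈ L.map (QuotientGroup.mk' K) :=
      ⟨x, hHL hxH, rfl⟩
    have hcommq : Commute (QuotientGroup.mk' K y) (QuotientGroup.mk' K x) := by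
      have := congrArg (QuotientGroup.mk' K) hcomm.eq
      have e : (y : G ⧸ K) * (x : G ⧸ K) = (x : G ⧸ K) * (y : G ⧸ K) := by
        simpa [map_mul] using this
      exact e
    have hx1 : (QuotientGroup.mk' K x) = 1 := frob_centralizer hC hyq hxq hcommq
    have hxK : x ∈ K := by
      rwa [QuotientGroup.mk'_apply, QuotientGroup.eq_one_iff] at hx1
    have : x ∈ K ⊓ H := ⟨hxK, hxH⟩
    rwa [hdisj, Subgroup.mem_bot] at this
  -- Frattini: an element of the normalizer outside L
  obtain ⟨⟨c₁, hc₁C⟩, hc₁ne'⟩ := Subgroup.ne_bot_iff_exists_ne_one.mp hC.2.1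
  have hc₁ne : c₁ ≠ 1 := fun hc => hc₁ne' (Subtype.ext hc)
  have hc₁nL : c₁ ∉ L.map (QuotientGroup.mk' K) := by
    intro hc
    apply hc₁ne
    have : c₁ ∈ L.map (QuotientGroup.mk' K) ⊓ Cb := ⟨hc, hc₁C⟩
    rwa [hC.2.2.2.1, Subgroup.mem_bot] at this
  obtain ⟨g, hg⟩ := QuotientGroup.mk'_surjective K c₁
  have hgL : g ∉ L := fun hc => hc₁nL (hg ▸ ⟨g, hc, rfl⟩)
  obtain ⟨w, hwK, hle⟩ := frob_conj hKL hHfull (frob_conjSub hHfull g)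
  have heq : conjSub g H = conjSub w H := by
    refine Subgroup.eq_of_le_of_card_ge hle ?_
    rw [card_conjSub, card_conjSub]
  have hn₀N : w⁻¹ * g ∈ N := by
    apply mem_normalizer_of_conjSub_eq
    rw [← conjSub_conjSub, heq, conjSub_conjSub, inv_mul_cancel, conjSub_one]
  have hn₀L : w⁻¹ * g ∉ L := by
    intro hc
    apply hgL
    have : g = w * (w⁻¹ * g) := by group
    rw [this]
    exact L.mul_mem (hKL hwK) hc
  -- cardinality identifications
  have cardHL : Nat.card ↥H = Nat.card ↥(L.map (QuotientGroup.mk' K)) := by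
    have hφbij : Function.Bijective
        (fun h : ↥H => (⟨QuotientGroup.mk' K h, ⟨(h : G), hHL h.2, rfl⟩⟩ :
          ↥(L.map (QuotientGroup.mk' K)))) := by
      constructor
      · intro h h' he
        have e1 : QuotientGroup.mk' K (h : G) = QuotientGroup.mk' K (h' : G) :=
          congrArg Subtype.val he
        obtain ⟨z, hzK, hz⟩ := (QuotientGroup.mk'_eq_mk' K).mp e1
        have hzH : z ∈ H := by
          have : z = (h : G)⁻¹ * (h' : G) := by rw [← hz]; group
          rw [this]
          exact H.mul_mem (H.inv_mem h.2) h'.2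
        have hz1 : z = 1 := by
          have : z ∈ K ⊓ H := ⟨hzK, hzH⟩
          rwa [hdisj, Subgroup.mem_bot] at this
        apply Subtype.ext
        rw [← hz, hz1, mul_one]
      · rintro ⟨q, l, hlL, rfl⟩
        obtain ⟨k, hk, h, hh, hlkh⟩ := hfact l hlL
        refine ⟨⟨h, hh⟩, ?_⟩
        apply Subtype.ext
        show QuotientGroup.mk' K h = QuotientGroup.mk' K l
        rw [hlkh, map_mul]
        have : QuotientGroup.mk' K k = 1 := by
          rw [QuotientGroup.mk'_apply, QuotientGroup.eq_one_iff]
          exact hk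
        rw [this, one_mul]
    exact Nat.card_congr (Equiv.ofBijective _ hφbij)
  have cardC : Nat.card (G ⧸ L) = Nat.card ↥Cb := by
    have hψbij : Function.Bijective
        (fun c : ↥Cb => (QuotientGroup.mk (c : G ⧸ K) :
          (G ⧸ K) ⧸ (L.map (QuotientGroup.mk' K)))) := by
      constructor
      · intro c c' he
        have := QuotientGroup.eq.mp he
        have hmem : (c : G ⧸ K)⁻¹ * (c' : G ⧸ K) ∈ L.map (QuotientGroup.mk' K) := this
        have hmem2 : (c : G ⧸ K)⁻¹ * (c' : G ⧸ K) ∈ Cb := Cb.mul_mem (Cb.inv_mem c.2) c'.2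
        have : (c : G ⧸ K)⁻¹ * (c' : G ⧸ K) = 1 := by
          have : (c : G ⧸ K)⁻¹ * (c' : G ⧸ K) ∈ L.map (QuotientGroup.mk' K) ⊓ Cb :=
            ⟨hmem, hmem2⟩
          rwa [hC.2.2.2.1, Subgroup.mem_bot] at this
        apply Subtype.ext
        have := congrArg (fun z => (c : G ⧸ K) * z) this
        simpa [mul_assoc] using this.symm
      · intro x
        obtain ⟨gb, rfl⟩ := QuotientGroup.mk_surjective x
        obtain ⟨lb, hlb, c, hcC, hgb⟩ := hC.2.2.1 gb (Subgroup.mem_top gb)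
        refine ⟨⟨c, hcC⟩, ?_⟩
        show QuotientGroup.mk c = QuotientGroup.mk gb
        rw [hgb]
        apply (QuotientGroup.eq).mpr
        have : c⁻¹ * (lb * c) = c⁻¹ * lb * c := by group
        rw [this]
        simpa using hLbarN.conj_mem _ hlb c⁻¹
    calc Nat.card (G ⧸ L)
        = Nat.card ((G ⧸ K) ⧸ (L.map (QuotientGroup.mk' K))) :=
          (Nat.card_congr (QuotientGroup.quotientQuotientEquivQuotient K L hKL).toEquiv).symm
      _ = Nat.card ↥Cb := (Nat.card_congr (Equiv.ofBijective _ hψbij)).symm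
  -- coprimality of |L/K| and |Cb|
  have coprimeLC : Nat.Coprime (Nat.card ↥(L.map (QuotientGroup.mk' K))) (Nat.card ↥Cb) := by
    by_contra hnc
    obtain ⟨p, hp, hpL, hpC⟩ := Nat.Prime.not_coprime_iff_dvd.mp hnc
    haveI : Fact p.Prime := ⟨hp⟩
    obtain ⟨c, hc⟩ := exists_prime_orderOf_dvd_card' (G := ↥Cb) p hpC
    have hct : orderOf (c : G ⧸ K) = p := by rw [Subgroup.orderOf_coe, hc]
    have hctne : (c : G ⧸ K) ≠ 1 := by
      intro hc1
      rw [hc1, orderOf_one] at hct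
      exact hp.one_lt.ne hct
    have hZp : IsPGroup p ↥(Subgroup.zpowers (c : G ⧸ K)) :=
      IsPGroup.of_card (n := 1) (by rw [Nat.card_zpowers, hct, pow_one])
    letI : MulAction ↥(Subgroup.zpowers (c : G ⧸ K)) ↥(L.map (QuotientGroup.mk' K)) :=
      { smul := fun z l => ⟨(z : G ⧸ K) * (l : G ⧸ K) * (z : G ⧸ K)⁻¹,
          hLbarN.conj_mem _ l.2 (z : G ⧸ K)⟩
        one_smul := fun l => Subtype.ext (by
          show ((1 : ↥(Subgroup.zpowers (c : G ⧸ K))) : G ⧸ K) * (l : G ⧸ K) *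
            ((1 : ↥(Subgroup.zpowers (c : G ⧸ K))) : G ⧸ K)⁻¹ = (l : G ⧸ K)
          simp)
        mul_smul := fun z z' l => Subtype.ext (by
          show ((z * z' : ↥(Subgroup.zpowers (c : G ⧸ K))) : G ⧸ K) * (l : G ⧸ K) *
              ((z * z' : ↥(Subgroup.zpowers (c : G ⧸ K))) : G ⧸ K)⁻¹ =
            (z : G ⧸ K) * ((z' : G ⧸ K) * (l : G ⧸ K) * (z' : G ⧸ K)⁻¹) * (z : G ⧸ K)⁻¹
          rw [Subgroup.coe_mul]
          group) }
    have key : ∀ (m : ↥(L.map (QuotientGroup.mk' K))),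
        m ∈ MulAction.fixedPoints ↥(Subgroup.zpowers (c : G ⧸ K))
          ↥(L.map (QuotientGroup.mk' K)) → m = 1 := by
      rintro ⟨m, hmL⟩ hmfix
      have h1 := hmfix ⟨(c : G ⧸ K), Subgroup.mem_zpowers _⟩
      have e1 : (c : G ⧸ K) * m * (c : G ⧸ K)⁻¹ = m := congrArg Subtype.val h1
      have e2 : Commute (c : G ⧸ K) m := by
        have := congrArg (· * (c : G ⧸ K)) e1
        have e : (c : G ⧸ K) * m = m * (c : G ⧸ K) := by simpa [mul_assoc] using this
        exact e
      exact Subtype.ext (hC.2.2.2.2 (c : G ⧸ K) c.2 hctne m hmL e2)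
    have hfixcard : Nat.card
        (MulAction.fixedPoints ↥(Subgroup.zpowers (c : G ⧸ K))
          ↥(L.map (QuotientGroup.mk' K))) = 1 := by
      rw [Nat.card_eq_one_iff_unique]
      refine ⟨⟨fun a b => Subtype.ext ((key a.1 a.2).trans (key b.1 b.2).symm)⟩, ⟨⟨1, ?_⟩⟩⟩
      intro z
      apply Subtype.ext
      show (z : G ⧸ K) * ((1 : ↥(L.map (QuotientGroup.mk' K))) : G ⧸ K) *
        (z : G ⧸ K)⁻¹ = ((1 : ↥(L.map (QuotientGroup.mk' K))) : G ⧸ K)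
      simp
    have hmod := IsPGroup.card_modEq_card_fixedPoints (p := p) hZp
      ↥(L.map (QuotientGroup.mk' K))
    rw [hfixcard] at hmod
    have h0 : Nat.card ↥(L.map (QuotientGroup.mk' K)) % p = 1 % p := hmod
    have hz : Nat.card ↥(L.map (QuotientGroup.mk' K)) % p = 0 :=
      Nat.mod_eq_zero_of_dvd hpL
    have ho : (1 : ℕ) % p = 1 := Nat.mod_eq_of_lt hp.one_lt
    omega
  -- Schur–Zassenhaus in the normalizer
  set H' := H.subgroupOf N with hH'def
  haveI hH'N : H'.Normal := Subgroup.normal_in_normalizer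
  have cardH' : Nat.card ↥H' = Nat.card ↥H :=
    Nat.card_congr (Subgroup.subgroupOfEquivOfLe hHN).toEquiv
  have hker : ((QuotientGroup.mk' L).comp N.subtype).ker = H' := by
    ext x
    rw [MonoidHom.mem_ker, MonoidHom.comp_apply, QuotientGroup.mk'_apply,
      QuotientGroup.eq_one_iff]
    constructor
    · intro hxL
      exact Subgroup.mem_subgroupOf.mpr (hNL _ x.2 hxL)
    · intro hxH'
      exact hHL (Subgroup.mem_subgroupOf.mp hxH')
  have hidx : H'.index ∣ Nat.card ↥Cb := by
    rw [← cardC, Subgroup.index_eq_card]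
    have e := Nat.card_congr
      (QuotientGroup.quotientKerEquivRange ((QuotientGroup.mk' L).comp N.subtype)).toEquiv
    rw [hker] at e
    rw [e]
    exact Subgroup.card_subgroup_dvd_card _
  have hcop : Nat.Coprime (Nat.card ↥H') H'.index := by
    rw [cardH', cardHL]
    exact Nat.Coprime.coprime_dvd_right hidx coprimeLC
  obtain ⟨C, hCcompl⟩ := Subgroup.exists_right_complement'_of_coprime hcop
  have hbot : H' ⊓ C = ⊥ := disjoint_iff.mp hCcompl.disjoint
  have hCne : C ≠ ⊥ := by
    intro hc
    have hmem : (⟨w⁻¹ * g, hn₀N⟩ : ↥N) ∈ H' := by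
      obtain ⟨⟨k', c'⟩, hxe, -⟩ := hCcompl.existsUnique (⟨w⁻¹ * g, hn₀N⟩ : ↥N)
      have hc1 : (c' : ↥N) = 1 := by
        have hmc : (c' : ↥N) ∈ (⊥ : Subgroup ↥N) := by rw [← hc]; exact c'.2
        rwa [Subgroup.mem_bot] at hmc
      have : (k' : ↥N) * (c' : ↥N) = ⟨w⁻¹ * g, hn₀N⟩ := hxe
      rw [hc1, mul_one] at this
      rw [← this]
      exact k'.2
    exact hn₀L (hHL (Subgroup.mem_subgroupOf.mp hmem))
  refine ⟨C, Subgroup.normal_in_normalizer, ?_, le_top, hCne, ?_, hbot, ?_⟩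
  · refine Subgroup.ne_bot_iff_exists_ne_one.mpr
      ⟨⟨⟨h₁, hHN hh₁H⟩, Subgroup.mem_subgroupOf.mpr hh₁H⟩, fun hc => hh₁ne ?_⟩
    have := congrArg (fun z : ↥H' => ((z : ↥N) : G)) hc
    simpa using this
  · intro x _
    obtain ⟨⟨k', c'⟩, hxe, -⟩ := hCcompl.existsUnique x
    exact ⟨k', k'.2, c', c'.2, hxe.symm⟩
  · intro cc hccC hccne x hxH' hcomm
    have hccL : (cc : G) ∉ L := by
      intro hmemL
      have hc2 : (cc : G) ∈ H := hNL _ cc.2 hmemL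
      have hm : cc ∈ H' ⊓ C := ⟨Subgroup.mem_subgroupOf.mpr hc2, hccC⟩
      rw [hbot, Subgroup.mem_bot] at hm
      exact hccne hm
    have hxH : (x : G) ∈ H := Subgroup.mem_subgroupOf.mp hxH'
    have hcommG : Commute (cc : G) (x : G) := by
      have := congrArg (fun z : ↥N => (z : G)) hcomm.eq
      have e : (cc : G) * (x : G) = (x : G) * (cc : G) := by simpa using this
      exact e
    have hx1 := hcent (cc : G) hccL (x : G) hxH hcommG
    exact Subtype.ext hx1
end

section
/- Let G be a finite 2-Frobenius group with respect to normal subgroups K ≤ L, let H be a Frobenius complement of K in L, and let D be a subgroup of G containing K such that D/K is a Frobenius complement of L/K in G/K. Then D = K · N_D(H), i.e., every element of D can be written as a product of an element of K and an element of D ∩ N_G(H). -/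
open MulAction in
private lemma key_fixed_point {A : Type*} [Group A] [Fintype A] {Ω : Type*} [Fintype Ω]
    [MulAction A Ω] (hnt : ∃ x : A, x ≠ 1)
    (huniq : ∀ x : A, x ≠ 1 → ∃! ω : Ω, x • ω = ω) :
    ∃ ω : Ω, ∀ x : A, x • ω = ω := by
  classical
  by_contra hcon
  push_neg at hcon
  -- T ω : nonidentity elements fixing ω
  set T : Ω → Finset A := fun ω => Finset.univ.filter (fun x => x • ω = ω ∧ x ≠ 1) with hT
  have memT : ∀ (x : A) (ω : Ω), x ∈ T ω ↔ (x • ω = ω ∧ x ≠ 1) := by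
    intro x ω; simp [hT]
  have hTdisj : ∀ ω₁ ω₂ : Ω, ω₁ ≠ ω₂ → Disjoint (T ω₁) (T ω₂) := by
    intro ω₁ ω₂ hne
    refine Finset.disjoint_left.2 fun x hx1 hx2 => ?_
    rw [memT] at hx1 hx2
    exact hne ((huniq x hx1.2).unique hx1.1 hx2.1)
  -- T along an orbit : image under conjugation
  have hTimage : ∀ (g : A) (ω : Ω), T (g • ω) = (T ω).image (fun x => g * x * g⁻¹) := by
    intro g ω
    ext y
    rw [memT, Finset.mem_image]
    constructor
    · rintro ⟨hy, hy1⟩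
      refine ⟨g⁻¹ * y * g, ?_, by group⟩
      rw [memT]
      constructor
      · have : (g⁻¹ * y * g) • ω = g⁻¹ • y • g • ω := by rw [mul_smul, mul_smul]
        rw [this, hy, inv_smul_smul]
      · intro h
        apply hy1
        have : y = g * (g⁻¹ * y * g) * g⁻¹ := by group
        rw [this, h]; group
    · rintro ⟨x, hx, rfl⟩
      rw [memT] at hx
      constructor
      · rw [mul_smul, mul_smul, inv_smul_smul, hx.1]
      · intro h
        apply hx.2
        have : x = g⁻¹ * (g * x * g⁻¹) * g := by group
        rw [this, h]; group
  have hTcard : ∀ (g : A) (ω : Ω), (T (g • ω)).card = (T ω).card := by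
    intro g ω
    rw [hTimage]
    exact Finset.card_image_of_injective _ (fun a b h => by
      have := congrArg (fun z => g⁻¹ * z * g) h
      simpa [mul_assoc] using this)
  -- the orbit finset
  set o : Ω → Finset Ω := fun ω => (orbit A ω).toFinset with ho
  have memo : ∀ (ω' ω : Ω), ω' ∈ o ω ↔ ω' ∈ orbit A ω := by
    intro ω' ω; rw [ho]; exact Set.mem_toFinset
  set U : Ω → Finset A := fun ω => (o ω).biUnion T with hU
  -- card of T ω + 1 = card of stabilizer
  have hstab : ∀ ω : Ω, (T ω).card + 1 = Nat.card (stabilizer A ω) := by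
    intro ω
    have h1 : Finset.univ.filter (fun x : A => x ∈ stabilizer A ω) = insert 1 (T ω) := by
      ext x
      simp only [Finset.mem_filter, Finset.mem_univ, true_and, Finset.mem_insert, memT,
        mem_stabilizer_iff]
      constructor
      · intro hx
        by_cases h1 : x = 1
        · exact Or.inl h1
        · exact Or.inr ⟨hx, h1⟩
      · rintro (rfl | ⟨hx, _⟩)
        · exact one_smul _ _
        · exact hx
    have h2 : Nat.card (stabilizer A ω) = Fintype.card {x : A // x ∈ stabilizer A ω} :=
      Nat.card_eq_fintype_card
    rw [h2, Fintype.card_subtype, h1, Finset.card_insert_of_notMem (by simp [memT])]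
  -- orbit-stabilizer
  have horbstab : ∀ ω : Ω, (o ω).card * ((T ω).card + 1) = Fintype.card A := by
    intro ω
    have h1 : (o ω).card = Fintype.card (orbit A ω) := by
      rw [ho]; exact Set.toFinset_card _
    rw [h1, hstab, Nat.card_eq_fintype_card]
    exact card_orbit_mul_card_stabilizer_eq_card_group A ω
  -- card of U
  have hUcard : ∀ ω : Ω, (U ω).card + (o ω).card = Fintype.card A := by
    intro ω
    have h1 : (U ω).card = ∑ ω' ∈ o ω, (T ω').card :=
      Finset.card_biUnion (fun ω₁ h₁ ω₂ h₂ hne => hTdisj ω₁ ω₂ hne)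
    have h2 : ∀ ω' ∈ o ω, (T ω').card = (T ω).card := by
      intro ω' hω'
      rw [memo] at hω'
      obtain ⟨g, rfl⟩ := mem_orbit_iff.1 hω'
      exact hTcard g ω
    rw [h1, Finset.sum_congr rfl h2, Finset.sum_const, smul_eq_mul]
    have h3 := horbstab ω
    rw [Nat.mul_add, Nat.mul_one] at h3
    omega
  have memU : ∀ (x : A) (ω : Ω), x ∈ U ω ↔ ∃ ω', ω' ∈ orbit A ω ∧ x • ω' = ω' ∧ x ≠ 1 := by
    intro x ω
    rw [hU]
    simp only [Finset.mem_biUnion]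
    constructor
    · rintro ⟨ω', h1, h2⟩
      rw [memT] at h2
      exact ⟨ω', (memo ω' ω).1 h1, h2.1, h2.2⟩
    · rintro ⟨ω', h1, h2, h3⟩
      exact ⟨ω', (memo ω' ω).2 h1, (memT x ω').2 ⟨h2, h3⟩⟩
  obtain ⟨x₀, hx₀⟩ := hnt
  obtain ⟨ω₀, hfix₀, -⟩ := huniq x₀ hx₀
  obtain ⟨y, hy⟩ := hcon ω₀
  have hn₀ : 2 ≤ (o ω₀).card := by
    have : (1 : ℕ) < (o ω₀).card := Finset.one_lt_card.2
      ⟨ω₀, (memo _ _).2 (mem_orbit_self _), y • ω₀, (memo _ _).2 (mem_orbit _ _),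
      fun h => hy (h ▸ rfl)⟩
    omega
  have ht₀ : 1 ≤ (T ω₀).card :=
    Finset.card_pos.2 ⟨x₀, (memT _ _).2 ⟨hfix₀, hx₀⟩⟩
  have hcardA : 1 ≤ Fintype.card A := Fintype.card_pos
  have hsub : ¬ ((Finset.univ : Finset A).erase 1 ⊆ U ω₀) := by
    intro hs
    have h1 := Finset.card_le_card hs
    rw [Finset.card_erase_of_mem (Finset.mem_univ 1), Finset.card_univ] at h1
    have h2 := hUcard ω₀
    omega
  obtain ⟨z, hz_mem, hzU⟩ := Finset.not_subset.1 hsub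
  have hz : z ≠ 1 := (Finset.mem_erase.1 hz_mem).1
  obtain ⟨ω₁, hfix₁, -⟩ := huniq z hz
  have hω₁ : ω₁ ∉ orbit A ω₀ := fun h => hzU ((memU z ω₀).2 ⟨ω₁, h, hfix₁, hz⟩)
  have horbdisj : ∀ w : Ω, w ∈ orbit A ω₀ → w ∈ orbit A ω₁ → False := by
    intro w h0 h1
    obtain ⟨g, hg⟩ := mem_orbit_iff.1 h1
    obtain ⟨g', hg'⟩ := mem_orbit_iff.1 h0
    exact hω₁ (mem_orbit_iff.2 ⟨g⁻¹ * g', by rw [mul_smul, hg', ← hg, inv_smul_smul]⟩)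
  have hdisjU : Disjoint (U ω₀) (U ω₁) := by
    refine Finset.disjoint_left.2 fun x h0 h1 => ?_
    obtain ⟨a, ha, hxa, hx1⟩ := (memU x ω₀).1 h0
    obtain ⟨b, hb, hxb, -⟩ := (memU x ω₁).1 h1
    have : a = b := (huniq x hx1).unique hxa hxb
    exact horbdisj a ha (this ▸ hb)
  have ht₁ : 1 ≤ (T ω₁).card :=
    Finset.card_pos.2 ⟨z, (memT _ _).2 ⟨hfix₁, hz⟩⟩
  have hbound : ∀ ω : Ω, 1 ≤ (T ω).card → 2 * (o ω).card ≤ Fintype.card A := by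
    intro ω ht
    calc 2 * (o ω).card = (o ω).card * 2 := by ring
    _ ≤ (o ω).card * ((T ω).card + 1) := Nat.mul_le_mul_left _ (by omega)
    _ = Fintype.card A := horbstab ω
  have hb₀ := hbound ω₀ ht₀
  have hb₁ := hbound ω₁ ht₁
  have hUsub : U ω₀ ∪ U ω₁ ⊆ (Finset.univ : Finset A).erase 1 := by
    intro x hx
    rcases Finset.mem_union.1 hx with h | h
    · obtain ⟨-, -, -, hx1⟩ := (memU x ω₀).1 h
      exact Finset.mem_erase.2 ⟨hx1, Finset.mem_univ x⟩
    · obtain ⟨-, -, -, hx1⟩ := (memU x ω₁).1 h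
      exact Finset.mem_erase.2 ⟨hx1, Finset.mem_univ x⟩
  have hfin := Finset.card_le_card hUsub
  rw [Finset.card_union_of_disjoint hdisjU, Finset.card_erase_of_mem (Finset.mem_univ 1),
    Finset.card_univ] at hfin
  have e0 := hUcard ω₀
  have e1 := hUcard ω₁
  omega


section CsHelper

variable {G : Type*} [Group G]

/-- Conjugate of a subgroup: `cs g P = g P g⁻¹`. -/
private def cs (g : G) (P : Subgroup G) : Subgroup G := P.map (MulAut.conj g).toMonoidHom

private lemma mem_cs {g x : G} {P : Subgroup G} : x ∈ cs g P ↔ g⁻¹ * x * g ∈ P := by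
  rw [cs, Subgroup.mem_map_equiv]
  simp [mul_assoc]

private lemma cs_cs (g g' : G) (P : Subgroup G) : cs g (cs g' P) = cs (g * g') P := by
  ext x
  rw [mem_cs, mem_cs, mem_cs]
  have h : g'⁻¹ * (g⁻¹ * x * g) * g' = (g * g')⁻¹ * x * (g * g') := by group
  rw [h]

private lemma cs_one (P : Subgroup G) : cs 1 P = P := by
  ext x; simp [mem_cs]

private lemma cs_self {x : G} {P : Subgroup G} (hx : x ∈ P) : cs x P = P := by
  ext y
  rw [mem_cs]
  constructor
  · intro h
    have h2 := mul_mem (mul_mem hx h) (inv_mem hx)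
    convert h2 using 1
    group
  · intro h
    exact mul_mem (mul_mem (inv_mem hx) h) hx

private lemma card_cs (g : G) (P : Subgroup G) : Nat.card (cs g P) = Nat.card P :=
  (Nat.card_congr (P.equivMapOfInjective (MulAut.conj g).toMonoidHom
    (MulAut.conj g).injective).toEquiv).symm

end CsHelper

theorem factorization_of_D
    {G : Type*} [Group G] [Fintype G] (K L : Subgroup G) [K.Normal] [L.Normal]
    (h2 : Is2Frobenius G K L) (H : Subgroup G) (hH : IsFrobeniusComplementIn K L H)
    (D : Subgroup G) (hKD : K ≤ D)
    (hD : IsFrobeniusComplementIn (L.map (QuotientGroup.mk' K)) ⊤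
      (D.map (QuotientGroup.mk' K))) :
    ∀ d ∈ D, ∃ k ∈ K, ∃ n ∈ D ⊓ Subgroup.normalizer (H : Set G), d = k * n := by
  classical
  obtain ⟨hHL, hHbot, hdec, hKHbot, hCent⟩ := hH
  have hKL : K ≤ L := h2.2.1.le
  have hKn : K.Normal := inferInstance
  have hLn : L.Normal := inferInstance
  intro d hd
  -- elementwise triviality of K ⊓ H
  have bothKH : ∀ x : G, x ∈ K → x ∈ H → x = 1 := by
    intro x h1 h2
    have : x ∈ K ⊓ H := Subgroup.mem_inf.2 ⟨h1, h2⟩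
    rw [hKHbot] at this
    exact Subgroup.mem_bot.1 this
  -- L2 : surjectivity of a ↦ a h a⁻¹ h⁻¹ on K
  have L2 : ∀ h : G, h ∈ H → h ≠ 1 → ∀ k ∈ K, ∃ a ∈ K, a * h * a⁻¹ = k * h := by
    intro h hh hne k hk
    set φ : K → K := fun a => ⟨(a : G) * (h * (a : G)⁻¹ * h⁻¹),
      mul_mem a.2 (hKn.conj_mem _ (inv_mem a.2) h)⟩ with hφ
    have hinj : Function.Injective φ := by
      intro a b hab
      have h1 : (a : G) * (h * (a : G)⁻¹ * h⁻¹) = (b : G) * (h * (b : G)⁻¹ * h⁻¹) :=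
        congrArg Subtype.val hab
      have h2 : ((b : G)⁻¹ * a) * h = h * ((b : G)⁻¹ * a) := by
        have h3 := congrArg (fun z => (b : G)⁻¹ * z * (h * (a : G))) h1
        calc ((b : G)⁻¹ * a) * h
            = (b : G)⁻¹ * ((a : G) * (h * (a : G)⁻¹ * h⁻¹)) * (h * (a : G)) := by group
          _ = (b : G)⁻¹ * ((b : G) * (h * (b : G)⁻¹ * h⁻¹)) * (h * (a : G)) := by rw [h1]
          _ = h * ((b : G)⁻¹ * a) := by group
      have h4 : ((b : G)⁻¹ * (a : G)) = 1 :=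
        hCent h hh hne _ (mul_mem (inv_mem b.2) a.2) h2.symm
      have h5 : (b : G) = a := by
        have := congrArg (fun z => (b : G) * z) h4
        simpa [mul_assoc] using this.symm
      exact Subtype.ext h5.symm
    have hsurj : Function.Surjective φ := Finite.injective_iff_surjective.1 hinj
    obtain ⟨a, ha⟩ := hsurj ⟨k, hk⟩
    refine ⟨a, a.2, ?_⟩
    have h6 : (a : G) * (h * (a : G)⁻¹ * h⁻¹) = k := congrArg Subtype.val ha
    calc (a : G) * h * (a : G)⁻¹ = ((a : G) * (h * (a : G)⁻¹ * h⁻¹)) * h := by group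
      _ = k * h := by rw [h6]
  -- L5 : an element of L normalizing H lies in H
  have L5 : ∀ x : G, x ∈ L → cs x H = H → x ∈ H := by
    intro x hx hcs
    obtain ⟨k, hk, h, hh, rfl⟩ := hdec x hx
    have hcsk : cs k H = H := by
      have e1 : cs (k * h) (cs h⁻¹ H) = cs k H := by
        rw [cs_cs]
        congr 1
        group
      rw [cs_self (inv_mem hh), hcs] at e1
      exact e1.symm
    obtain ⟨h₁s, hne₁s⟩ := Subgroup.ne_bot_iff_exists_ne_one.1 hHbot
    set h₁ : G := (h₁s : G)
    have hh₁ : h₁ ∈ H := h₁s.2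
    have hne₁ : h₁ ≠ 1 := fun hc => hne₁s (Subtype.ext hc)
    have hmem : k * h₁ * k⁻¹ ∈ H := by
      rw [← hcsk, mem_cs]
      have : k⁻¹ * (k * h₁ * k⁻¹) * k = h₁ := by group
      rw [this]
      exact hh₁
    have hKmem : (k * h₁ * k⁻¹) * h₁⁻¹ ∈ K := by
      have h7 : h₁ * k⁻¹ * h₁⁻¹ ∈ K := hKn.conj_mem _ (inv_mem hk) h₁
      have h8 := mul_mem hk h7
      convert h8 using 1
      group
    have h9 : (k * h₁ * k⁻¹) * h₁⁻¹ = 1 :=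
      bothKH _ hKmem (mul_mem hmem (inv_mem hh₁))
    have h10 : k * h₁ = h₁ * k := by
      have := congrArg (fun z => z * h₁ * k) h9
      simpa [mul_assoc] using this
    have h11 : k = 1 := hCent h₁ hh₁ hne₁ k hk h10.symm
    rw [h11, one_mul]
    exact hh
  -- L3 : every element of L ∖ K lies in some K-conjugate of H
  have L3 : ∀ x : G, x ∈ L → x ∉ K → ∃ k ∈ K, x ∈ cs k H := by
    intro x hx hxK
    obtain ⟨k, hk, h, hh, rfl⟩ := hdec x hx
    have hne : h ≠ 1 := by
      rintro rfl
      rw [mul_one] at hxK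
      exact hxK hk
    obtain ⟨a, haK, ha⟩ := L2 h hh hne k hk
    refine ⟨a, haK, ?_⟩
    rw [mem_cs, ← ha]
    have : a⁻¹ * (a * h * a⁻¹) * a = h := by group
    rw [this]
    exact hh
  -- L4 : uniqueness of the conjugate
  have L4 : ∀ a ∈ K, ∀ b ∈ K, ∀ x : G, x ≠ 1 → x ∈ cs a H → x ∈ cs b H → a = b := by
    intro a ha b hb x hx hxa hxb
    rw [mem_cs] at hxa hxb
    set h : G := a⁻¹ * x * a with hdef
    set h' : G := b⁻¹ * x * b with h'def
    have hne : h ≠ 1 := by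
      intro hc
      apply hx
      have := congrArg (fun z => a * z * a⁻¹) hc
      simpa [hdef, mul_assoc] using this
    have hrel : h' = (b⁻¹ * a) * h * (b⁻¹ * a)⁻¹ := by
      rw [hdef, h'def]; group
    have hKmem : h' * h⁻¹ ∈ K := by
      have h7 : h * (b⁻¹ * a)⁻¹ * h⁻¹ ∈ K :=
        hKn.conj_mem _ (inv_mem (mul_mem (inv_mem hb) ha)) h
      have h8 := mul_mem (mul_mem (inv_mem hb) ha) h7
      rw [hrel]
      convert h8 using 1
      group
    have h9 : h' * h⁻¹ = 1 := bothKH _ hKmem (mul_mem hxb (inv_mem hxa))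
    have h10 : h' = h := by
      have := congrArg (fun z => z * h) h9
      simpa [mul_assoc] using this
    have hcomm : (b⁻¹ * a) * h = h * (b⁻¹ * a) := by
      have := congrArg (fun z => z * (b⁻¹ * a)) (hrel.symm.trans h10)
      simpa [mul_assoc] using this
    have h11 : b⁻¹ * a = 1 := hCent h hxa hne _ (mul_mem (inv_mem hb) ha) hcomm.symm
    have := congrArg (fun z => b * z) h11
    simpa [mul_assoc] using this
  -- membership from fixing a conjugate
  have fixmem : ∀ x : G, x ∈ L → ∀ k' ∈ K, cs x (cs k' H) = cs k' H → x ∈ cs k' H := by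
    intro x hx k' hk' hfix
    rw [cs_cs] at hfix
    have h1 : cs (k'⁻¹ * (x * k')) H = cs (k'⁻¹ * k') H := by
      rw [← cs_cs, ← cs_cs k'⁻¹ k', hfix]
    rw [inv_mul_cancel, cs_one] at h1
    have h2 : k'⁻¹ * (x * k') ∈ L :=
      mul_mem (inv_mem (hKL hk')) (mul_mem hx (hKL hk'))
    have h3 := L5 _ h2 h1
    rw [mem_cs]
    rw [← mul_assoc] at h3
    exact h3
  -- the conjugated complement
  have hPL : ∀ x : G, x ∈ cs d H → x ∈ L := by
    intro x hx
    rw [mem_cs] at hx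
    have h1 : d⁻¹ * x * d ∈ L := hHL hx
    have h2 := hLn.conj_mem _ h1 d
    convert h2 using 1
    group
  have hPK : ∀ x : G, x ∈ cs d H → x ∈ K → x = 1 := by
    intro x hx hxK
    rw [mem_cs] at hx
    have h1 : d⁻¹ * x * d ∈ K := by
      have := hKn.conj_mem _ hxK d⁻¹
      convert this using 1
      group
    have h2 : d⁻¹ * x * d = 1 := bothKH _ h1 hx
    have := congrArg (fun z => d * z * d⁻¹) h2
    simpa [mul_assoc] using this
  -- set up the action of ↥(cs d H) on the K-conjugates of H
  haveI hfinsub : Finite (Subgroup G) :=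
    Finite.of_injective (fun P : Subgroup G => (P : Set G)) SetLike.coe_injective
  let Ωt := {P : Subgroup G // ∃ k ∈ K, P = cs k H}
  haveI : Fintype Ωt := Fintype.ofFinite _
  haveI : Fintype ↥(cs d H) := Fintype.ofFinite _
  have closure : ∀ (x : ↥(cs d H)) (ω : Ωt), ∃ k ∈ K, cs (x : G) ω.1 = cs k H := by
    rintro x ⟨P, k, hk, rfl⟩
    have hxL : (x : G) ∈ L := hPL _ x.2
    rw [cs_cs]
    have hxkL : (x : G) * k ∈ L := mul_mem hxL (hKL hk)
    obtain ⟨k₁, hk₁, h₁, hh₁, he⟩ := hdec _ hxkL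
    refine ⟨k₁, hk₁, ?_⟩
    rw [he, ← cs_cs, cs_self hh₁]
  letI : MulAction ↥(cs d H) Ωt :=
    { smul := fun x ω => ⟨cs (x : G) ω.1, (closure x ω).choose, (closure x ω).choose_spec.1,
        (closure x ω).choose_spec.2⟩
      one_smul := fun ω => Subtype.ext (by
        show cs ((1 : ↥(cs d H)) : G) ω.1 = ω.1
        rw [OneMemClass.coe_one, cs_one])
      mul_smul := fun x y ω => Subtype.ext (by
        show cs ((x * y : ↥(cs d H)) : G) ω.1 = cs (x : G) (cs (y : G) ω.1)
        rw [cs_cs]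
        norm_cast) }
  have smul_def : ∀ (x : ↥(cs d H)) (ω : Ωt), (x • ω).1 = cs (x : G) ω.1 := fun _ _ => rfl
  -- nontriviality
  obtain ⟨h₀s, hh₀s⟩ := Subgroup.ne_bot_iff_exists_ne_one.1 hHbot
  have hh₀ : (h₀s : G) ∈ H := h₀s.2
  have hh₀ne : (h₀s : G) ≠ 1 := fun hc => hh₀s (Subtype.ext hc)
  have hx₀mem : d * h₀s * d⁻¹ ∈ cs d H := by
    rw [mem_cs]
    have : d⁻¹ * (d * h₀s * d⁻¹) * d = h₀s := by group
    rw [this]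
    exact hh₀
  have hnt : ∃ x : ↥(cs d H), x ≠ 1 := by
    refine ⟨⟨d * h₀s * d⁻¹, hx₀mem⟩, ?_⟩
    intro hc
    apply hh₀ne
    have h1 : d * h₀s * d⁻¹ = 1 := congrArg Subtype.val hc
    have := congrArg (fun z => d⁻¹ * z * d) h1
    simpa [mul_assoc] using this
  -- unique fixed points
  have huniq : ∀ x : ↥(cs d H), x ≠ 1 → ∃! ω : Ωt, x • ω = ω := by
    intro x hx
    have hxg : (x : G) ≠ 1 := fun hc => hx (Subtype.ext hc)
    have hxL : (x : G) ∈ L := hPL _ x.2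
    have hxK : (x : G) ∉ K := fun hc => hxg (hPK _ x.2 hc)
    obtain ⟨k, hk, hxk⟩ := L3 _ hxL hxK
    refine ⟨⟨cs k H, k, hk, rfl⟩, Subtype.ext ?_, ?_⟩
    · rw [smul_def]
      exact cs_self hxk
    · rintro ⟨P', k', hk', rfl⟩ hfix
      have h1 : cs (x : G) (cs k' H) = cs k' H := congrArg Subtype.val hfix
      have h2 : (x : G) ∈ cs k' H := fixmem _ hxL k' hk' h1
      have h3 : k' = k := L4 k' hk' k hk _ hxg h2 hxk
      exact Subtype.ext (by show cs k' H = cs k H; rw [h3])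
  obtain ⟨⟨Pfix, k, hk, rfl⟩, hfixall⟩ := key_fixed_point hnt huniq
  -- cs d H ≤ cs k H, hence equal
  have hle : cs d H ≤ cs k H := by
    intro x hx
    by_cases h1 : x = 1
    · rw [h1]; exact one_mem _
    have h2 := hfixall ⟨x, hx⟩
    have h3 : cs x (cs k H) = cs k H := congrArg Subtype.val h2
    exact fixmem _ (hPL _ hx) k hk h3
  have hcard : Nat.card (cs k H) ≤ Nat.card (cs d H) := by
    rw [card_cs, card_cs]
  have heq : cs d H = cs k H := Subgroup.eq_of_le_of_card_ge hle hcard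
  -- k⁻¹ * d normalizes H
  have hcsnorm : cs (k⁻¹ * d) H = H := by
    have h1 : cs k⁻¹ (cs d H) = cs k⁻¹ (cs k H) := by rw [heq]
    rw [cs_cs, cs_cs, inv_mul_cancel, cs_one] at h1
    exact h1
  have hnorm : k⁻¹ * d ∈ Subgroup.normalizer (H : Set G) := by
    rw [Subgroup.mem_normalizer_iff]
    intro h
    constructor
    · intro hh
      rw [← hcsnorm, mem_cs]
      have : (k⁻¹ * d)⁻¹ * ((k⁻¹ * d) * h * (k⁻¹ * d)⁻¹) * (k⁻¹ * d) = h := by group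
      rw [this]
      exact hh
    · intro hh
      rw [← hcsnorm, mem_cs] at hh
      have e : (k⁻¹ * d)⁻¹ * ((k⁻¹ * d) * h * (k⁻¹ * d)⁻¹) * (k⁻¹ * d) = h := by group
      rw [e] at hh
      exact hh
  refine ⟨k, hk, k⁻¹ * d, Subgroup.mem_inf.2 ⟨mul_mem (inv_mem (hKD hk)) hd, hnorm⟩, ?_⟩
  group
end

section
/- If G is a finite nilpotent group whose order is divisible by at least two distinct primes, then the cyclic graph Δ(G) is connected. -/
/-! In a finite nilpotent group the Sylow subgroups are normal and pairwise disjoint, so elements of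
distinct prime orders commute and generate a cyclic group: vertices of distinct prime orders are
adjacent in `Δ(G)`. Every vertex `x` lies in a common cyclic group with a power of `x` of prime
order, and a vertex of order `p` reaches a vertex of order `q ≠ p` directly, and any other vertex of
order `p` through it. -/

open Subgroup SimpleGraph

section

variable {G : Type*} [Group G]

theorem Commute.mem_zpowers_mul_of_coprime {x y : G} (h : Commute x y)
    (hco : (orderOf x).Coprime (orderOf y)) : x ∈ zpowers (x * y) := by
  have hpow : (x * y) ^ orderOf y = x ^ orderOf y := by
    rw [h.mul_pow, pow_orderOf_eq_one, mul_one]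
  exact zpowers_le.mpr (hpow ▸ npow_mem_zpowers _ _) (mem_zpowers_pow_iff.mpr hco.symm)

theorem isCyclic_closure_pair_of_mem_zpowers {x y g : G} (hx : x ∈ zpowers g)
    (hy : y ∈ zpowers g) : IsCyclic (closure ({x, y} : Set G)) :=
  isCyclic_of_le <| (closure_le _).mpr <| Set.insert_subset hx (Set.singleton_subset_iff.mpr hy)

theorem cyclicGraph_reachable_of_mem_zpowers {u v : {x : G // x ≠ 1}} {g : G}
    (hu : (u : G) ∈ zpowers g) (hv : (v : G) ∈ zpowers g) : (cyclicGraph G).Reachable u v := by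
  by_cases huv : u = v
  · exact huv ▸ Reachable.refl u
  · exact Adj.reachable ⟨huv, isCyclic_closure_pair_of_mem_zpowers hu hv⟩

theorem cyclicGraph_reachable_of_commute_of_coprime {u v : {x : G // x ≠ 1}}
    (h : Commute (u : G) v) (hco : (orderOf (u : G)).Coprime (orderOf (v : G))) :
    (cyclicGraph G).Reachable u v :=
  cyclicGraph_reachable_of_mem_zpowers (h.mem_zpowers_mul_of_coprime hco)
    (h.eq ▸ h.symm.mem_zpowers_mul_of_coprime hco.symm)

theorem exists_orderOf_prime_cyclicGraph_reachable (u : {x : G // x ≠ 1})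
    (hu : IsOfFinOrder (u : G)) :
    ∃ v : {x : G // x ≠ 1}, (orderOf (v : G)).Prime ∧ (cyclicGraph G).Reachable u v := by
  have hr : (orderOf (u : G)).minFac.Prime := Nat.minFac_prime (orderOf_eq_one_iff.not.mpr u.2)
  have : Fact (orderOf (u : G)).minFac.Prime := ⟨hr⟩
  have hord : orderOf ((u : G) ^ (orderOf (u : G) / (orderOf (u : G)).minFac)) =
      (orderOf (u : G)).minFac :=
    orderOf_pow_orderOf_div hu.orderOf_pos.ne' (Nat.minFac_dvd _)
  exact ⟨⟨_, (orderOf_eq_prime_iff.mp hord).2⟩, hord.symm ▸ hr,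
    cyclicGraph_reachable_of_mem_zpowers (mem_zpowers _) (npow_mem_zpowers _ _)⟩

section Nilpotent

variable [Finite G] [Group.IsNilpotent G]

theorem IsPGroup.commute_of_isNilpotent {p q : ℕ} [Fact p.Prime] [Fact q.Prime] (hpq : p ≠ q)
    {H K : Subgroup G} (hH : IsPGroup p H) (hK : IsPGroup q K) {x y : G} (hx : x ∈ H)
    (hy : y ∈ K) : Commute x y := by
  obtain ⟨P, hHP⟩ := hH.exists_le_sylow
  obtain ⟨Q, hKQ⟩ := hK.exists_le_sylow
  exact commute_of_normal_of_disjoint P Q inferInstance inferInstance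
    (IsPGroup.disjoint_of_ne p q hpq _ _ P.isPGroup' Q.isPGroup') x y (hHP hx) (hKQ hy)

theorem commute_of_orderOf_prime_of_ne {x y : G} (hx : (orderOf x).Prime)
    (hy : (orderOf y).Prime) (hne : orderOf x ≠ orderOf y) : Commute x y :=
  have : Fact (orderOf x).Prime := ⟨hx⟩
  have : Fact (orderOf y).Prime := ⟨hy⟩
  IsPGroup.commute_of_isNilpotent hne
    (IsPGroup.of_card (n := 1) (by rw [Nat.card_zpowers, pow_one]))
    (IsPGroup.of_card (n := 1) (by rw [Nat.card_zpowers, pow_one])) (mem_zpowers x) (mem_zpowers y)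

theorem cyclicGraph_reachable_of_orderOf_prime_of_ne {u v : {x : G // x ≠ 1}}
    (hu : (orderOf (u : G)).Prime) (hv : (orderOf (v : G)).Prime)
    (hne : orderOf (u : G) ≠ orderOf (v : G)) : (cyclicGraph G).Reachable u v :=
  cyclicGraph_reachable_of_commute_of_coprime (commute_of_orderOf_prime_of_ne hu hv hne)
    ((Nat.coprime_primes hu hv).mpr hne)

end Nilpotent

end

theorem cyclicGraph_nilpotent_connected
    {G : Type*} [Group G] [Fintype G] (hG : Group.IsNilpotent G)
    (hpq : ∃ p q : ℕ, p.Prime ∧ q.Prime ∧ p ≠ q ∧ p ∣ Nat.card G ∧ q ∣ Nat.card G) :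
    (cyclicGraph G).Connected := by
  obtain ⟨p, q, hp, hq, hpq, hpG, hqG⟩ := hpq
  have : Fact p.Prime := ⟨hp⟩
  have : Fact q.Prime := ⟨hq⟩
  obtain ⟨a, ha⟩ := exists_prime_orderOf_dvd_card' p hpG
  obtain ⟨b, hb⟩ := exists_prime_orderOf_dvd_card' q hqG
  let A : {x : G // x ≠ 1} := ⟨a, (orderOf_eq_prime_iff.mp ha).2⟩
  let B : {x : G // x ≠ 1} := ⟨b, (orderOf_eq_prime_iff.mp hb).2⟩
  have hA : (orderOf (A : G)).Prime := ha ▸ hp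
  have hB : (orderOf (B : G)).Prime := hb ▸ hq
  refine (connected_iff_exists_forall_reachable _).mpr ⟨A, fun u => ?_⟩
  obtain ⟨v, hv, huv⟩ := exists_orderOf_prime_cyclicGraph_reachable u (isOfFinOrder_of_finite _)
  refine Reachable.trans ?_ huv.symm
  by_cases hvp : orderOf (v : G) = p
  · have hAB := cyclicGraph_reachable_of_orderOf_prime_of_ne hA hB (ha ▸ hb ▸ hpq)
    exact hAB.trans (cyclicGraph_reachable_of_orderOf_prime_of_ne hB hv (hb ▸ hvp ▸ hpq.symm))
  · exact cyclicGraph_reachable_of_orderOf_prime_of_ne hA hv (ha ▸ Ne.symm hvp)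
end

section
/- Let G be a finite 2-Frobenius group with respect to normal subgroups K ≤ L, and let D be a subgroup of G containing K such that D/K is a Frobenius complement of L/K in G/K. If g is a nonidentity element of G and d ∈ D \ K is such that the subgroup ⟨g, d⟩ is cyclic, then g ∈ D. -/
/-! If `g` and `d` lie in a cyclic subgroup they commute, so their images in `G/K` commute.
In a Frobenius group `Q = N ⋊ H`, the centralizer of a nonidentity `u ∈ H` lies in `H`: writing
`x = l e` with `l ∈ N`, `e ∈ H`, the element `e u e⁻¹ u⁻¹ = l⁻¹ u l u⁻¹` lies in `H ⊓ N = 1`, so `l`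
commutes with `u` and hence `l = 1`. Applied to `u = dK` this puts `gK` in `D/K`, and `g ∈ D`
because `K ≤ D`. -/

theorem Subgroup.commute_of_isCyclic_closure_pair {G : Type*} [Group G] {a b : G}
    (h : IsCyclic (Subgroup.closure ({a, b} : Set G))) : Commute a b := by
  let := h.commGroup
  exact congrArg Subtype.val (mul_comm
    (⟨a, Subgroup.subset_closure (by simp)⟩ : Subgroup.closure ({a, b} : Set G))
    ⟨b, Subgroup.subset_closure (by simp)⟩)

theorem IsFrobeniusComplementIn.mem_of_commute {Q : Type*} [Group Q] {N H : Subgroup Q}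
    [N.Normal] (hH : IsFrobeniusComplementIn N ⊤ H) {u x : Q} (hu : u ∈ H) (hu1 : u ≠ 1)
    (hxu : Commute x u) : x ∈ H := by
  obtain ⟨-, -, hprod, hinf, hcent⟩ := hH
  obtain ⟨l, hl, e, he, rfl⟩ := hprod x (Subgroup.mem_top x)
  have hconj : e * u * e⁻¹ = l⁻¹ * u * l := by
    calc e * u * e⁻¹ = l⁻¹ * (l * e * u) * e⁻¹ := by group
      _ = l⁻¹ * (u * (l * e)) * e⁻¹ := by rw [hxu.eq]
      _ = l⁻¹ * u * l := by group
  have hmem : e * u * e⁻¹ * u⁻¹ ∈ N ⊓ H := by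
    refine ⟨?_, H.mul_mem (H.mul_mem (H.mul_mem he hu) (H.inv_mem he)) (H.inv_mem hu)⟩
    rw [hconj, show l⁻¹ * u * l * u⁻¹ = l⁻¹ * (u * l * u⁻¹) by group]
    exact N.mul_mem (N.inv_mem hl) (Subgroup.Normal.conj_mem inferInstance l hl u)
  rw [hinf, Subgroup.mem_bot, hconj, mul_inv_eq_one, mul_assoc, inv_mul_eq_iff_eq_mul] at hmem
  rw [hcent u hu hu1 l hl hmem, one_mul]
  exact he

theorem swimming_into_D_general
    {G : Type*} [Group G] (K L : Subgroup G) [K.Normal] [L.Normal]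
    (D : Subgroup G) (hKD : K ≤ D)
    (hD : IsFrobeniusComplementIn (L.map (QuotientGroup.mk' K)) ⊤
      (D.map (QuotientGroup.mk' K)))
    (g d : G) (hd : d ∈ D) (hdK : d ∉ K)
    (hcyc : IsCyclic ↥(Subgroup.closure ({g, d} : Set G))) :
    g ∈ D := by
  have hdq : QuotientGroup.mk' K d ≠ 1 := by simpa [QuotientGroup.eq_one_iff] using hdK
  have hgq := hD.mem_of_commute (Subgroup.mem_map_of_mem _ hd) hdq
    ((Subgroup.commute_of_isCyclic_closure_pair hcyc).map _)
  rwa [← Subgroup.mem_comap, Subgroup.comap_map_eq_self (by simpa using hKD)] at hgq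

theorem swimming_into_D
    {G : Type*} [Group G] [Fintype G] (K L : Subgroup G) [K.Normal] [L.Normal]
    (h2 : Is2Frobenius G K L) (D : Subgroup G) (hKD : K ≤ D)
    (hD : IsFrobeniusComplementIn (L.map (QuotientGroup.mk' K)) ⊤
      (D.map (QuotientGroup.mk' K)))
    (g d : G) (hg : g ≠ 1) (hd : d ∈ D) (hdK : d ∉ K)
    (hcyc : IsCyclic ↥(Subgroup.closure ({g, d} : Set G))) :
    g ∈ D :=
  swimming_into_D_general K L D hKD hD g d hd hdK hcyc
end
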